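/- Let A, B, C be n×n positive definite complex matrices and define d(A,B) := sqrt(Tr(log((A+B)/2)) - (1/2)Tr(log A) - (1/2)Tr(log B)). Then d(A,C) ≤ d(A,B) + d(B,C); hence d is a metric on the positive definite cone. -/

import Mathlib

open scoped BigOperators ComplexOrder
open Matrix

open Classical in
noncomputable def trFun {I : Type*} [Fintype I] [DecidableEq I]
    (f : ℝ → ℝ) (A : Matrix I I ℂ) : ℝ :=
  if hA : A.IsHermitian then ∑ i, f (hA.eigenvalues i) else 0

open Classical in
noncomputable def psqrt {I : Type*} [Fintype I] [DecidableEq I]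
    (A : Matrix I I ℂ) : Matrix I I ℂ :=
  if hA : A.PosSemidef then
    hA.1.eigenvectorUnitary.1 * diagonal ((↑) ∘ (√·) ∘ hA.1.eigenvalues) *
      (star hA.1.eigenvectorUnitary : Matrix I I ℂ)
  else 0

noncomputable def geoMean {I : Type*} [Fintype I] [DecidableEq I]
    (A B : Matrix I I ℂ) : Matrix I I ℂ :=
  psqrt A * psqrt ((psqrt A)⁻¹ * B * (psqrt A)⁻¹) * psqrt A

noncomputable def dsqLog {I : Type*} [Fintype I] [DecidableEq I]
    (A B : Matrix I I ℂ) : ℝ :=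
  trFun Real.log (((1 : ℝ) / 2) • (A + B))
    - (1 / 2) * trFun Real.log A - (1 / 2) * trFun Real.log B

noncomputable def Jdiv {I : Type*} [Fintype I] [DecidableEq I]
    (A B : Matrix I I ℂ) : ℝ :=
  (1 / 2) * trFun (fun x => x * Real.log x) A
    + (1 / 2) * trFun (fun x => x * Real.log x) B
    - trFun (fun x => x * Real.log x) (((1 : ℝ) / 2) • (A + B))


noncomputable def ell (x : ℝ) : ℝ := Real.log ((1+x)/2) - Real.log x / 2

lemma two_ell {x : ℝ} (hx : 0 < x) : 2 * ell x = Real.log ((1+x)^2/(4*x)) := by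
  have h1 : (0:ℝ) < 1 + x := by linarith
  have e1 : Real.log ((1+x)^2/(4*x)) = Real.log ((1+x)^2) - Real.log (4*x) :=
    Real.log_div (by positivity) (by positivity)
  have e2 : Real.log ((1+x)^2) = 2 * Real.log (1+x) := by
    rw [Real.log_pow]; push_cast; ring
  have e3 : Real.log (4*x) = Real.log 4 + Real.log x :=
    Real.log_mul (by norm_num) (ne_of_gt hx)
  have e4 : Real.log ((1+x)/2) = Real.log (1+x) - Real.log 2 :=
    Real.log_div (ne_of_gt h1) (by norm_num)
  have e5 : Real.log 4 = 2 * Real.log 2 := by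
    rw [show (4:ℝ) = 2^2 by norm_num, Real.log_pow]; push_cast; ring
  rw [ell, e1, e2, e3, e4, e5]; ring

lemma ell_key {x : ℝ} (hx : 0 < x) :
    1 - ((1-x)/(1+x))^2 = 4*x/(1+x)^2 := by
  have h1 : (1:ℝ) + x ≠ 0 := by positivity
  field_simp
  ring

lemma two_ell_nonneg {x : ℝ} (hx : 0 < x) : 0 ≤ 2 * ell x := by
  rw [two_ell hx]
  apply Real.log_nonneg
  rw [le_div_iff₀ (by positivity)]
  nlinarith [sq_nonneg (1-x)]

lemma ell_nonneg {x : ℝ} (hx : 0 < x) : 0 ≤ ell x := by linarith [two_ell_nonneg hx]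

lemma ell_eq_zero_iff {x : ℝ} (hx : 0 < x) : ell x = 0 ↔ x = 1 := by
  constructor
  · intro h
    have h2 : Real.log ((1+x)^2/(4*x)) = 0 := by rw [← two_ell hx, h]; ring
    have hy : (0:ℝ) < (1+x)^2/(4*x) := by positivity
    have : (1+x)^2/(4*x) = 1 := by
      have := Real.exp_log hy
      rw [h2, Real.exp_zero] at this; linarith
    have h4 : (1+x)^2 = 4*x := by
      field_simp at this; linarith
    nlinarith [sq_nonneg (1-x)]
  · intro h; subst h
    norm_num [ell]

lemma tau_sq_le {x : ℝ} (hx : 0 < x) : ((1-x)/(1+x))^2 ≤ 2 * ell x := by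
  rw [two_ell hx]
  have hy : (0:ℝ) < (1+x)^2/(4*x) := by positivity
  have hlog : Real.log ((4*x)/(1+x)^2) ≤ (4*x)/(1+x)^2 - 1 :=
    Real.log_le_sub_one_of_pos (by positivity)
  have hinv : Real.log ((4*x)/(1+x)^2) = - Real.log ((1+x)^2/(4*x)) := by
    rw [← Real.log_inv]
    congr 1
    field_simp
  rw [hinv] at hlog
  have : ((1-x)/(1+x))^2 = 1 - 4*x/(1+x)^2 := by
    rw [← ell_key hx]; ring
  rw [this]; linarith

lemma abs_tau_le {x : ℝ} (hx : 0 < x) : |(1-x)/(1+x)| ≤ Real.sqrt (2 * ell x) := by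
  rw [← Real.sqrt_sq_eq_abs]
  exact Real.sqrt_le_sqrt (tau_sq_le hx)

/-- Core scalar triangle inequality: `ell (u*v) ≤ (√(ell u) + √(ell v))^2`. -/
lemma ell_mul_le {u v : ℝ} (hu : 0 < u) (hv : 0 < v) :
    ell (u*v) ≤ (Real.sqrt (ell u) + Real.sqrt (ell v))^2 := by
  have hpu : (0:ℝ) < 1 + u := by linarith
  have hpv : (0:ℝ) < 1 + v := by linarith
  have huv : (0:ℝ) < u * v := mul_pos hu hv
  set tu := (1-u)/(1+u) with htu
  set tv := (1-v)/(1+v) with htv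
  have hprod : 1 + tu * tv = 2*(1+u*v)/((1+u)*(1+v)) := by
    rw [htu, htv]; field_simp; ring
  have hposprod : (0:ℝ) < 1 + tu*tv := by
    rw [hprod]; positivity
  -- decomposition : ell (u*v) = ell u + ell v + log (1 + tu*tv)
  have huv1 : (0:ℝ) < 1 + u*v := by nlinarith
  have hdecomp : ell (u*v) = ell u + ell v + Real.log (1 + tu*tv) := by
    have f1 : Real.log (u*v) = Real.log u + Real.log v :=
      Real.log_mul (ne_of_gt hu) (ne_of_gt hv)
    have f2 : Real.log ((1+u*v)/2) = Real.log (1+u*v) - Real.log 2 :=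
      Real.log_div (ne_of_gt huv1) (by norm_num)
    have f3 : Real.log ((1+u)/2) = Real.log (1+u) - Real.log 2 :=
      Real.log_div (ne_of_gt hpu) (by norm_num)
    have f4 : Real.log ((1+v)/2) = Real.log (1+v) - Real.log 2 :=
      Real.log_div (ne_of_gt hpv) (by norm_num)
    have f5a : Real.log (2*(1+u*v)/((1+u)*(1+v)))
        = Real.log (2*(1+u*v)) - Real.log ((1+u)*(1+v)) :=
      Real.log_div (by positivity) (by positivity)
    have f5b : Real.log (2*(1+u*v)) = Real.log 2 + Real.log (1+u*v) :=
      Real.log_mul (by norm_num) (ne_of_gt huv1)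
    have f5c : Real.log ((1+u)*(1+v)) = Real.log (1+u) + Real.log (1+v) :=
      Real.log_mul (ne_of_gt hpu) (ne_of_gt hpv)
    rw [hprod, ell, ell, ell, f1, f2, f3, f4, f5a, f5b, f5c]
    ring
  have hlog_le : Real.log (1 + tu*tv) ≤ tu * tv := by
    have := Real.log_le_sub_one_of_pos hposprod
    linarith
  have h2 : tu * tv ≤ Real.sqrt (2 * ell u) * Real.sqrt (2 * ell v) := by
    calc tu * tv ≤ |tu * tv| := le_abs_self _
    _ = |tu| * |tv| := abs_mul _ _
    _ ≤ Real.sqrt (2 * ell u) * Real.sqrt (2 * ell v) :=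
        mul_le_mul (abs_tau_le hu) (abs_tau_le hv) (abs_nonneg _) (Real.sqrt_nonneg _)
  have h3 : Real.sqrt (2 * ell u) * Real.sqrt (2 * ell v)
      = 2 * (Real.sqrt (ell u) * Real.sqrt (ell v)) := by
    rw [Real.sqrt_mul (by norm_num : (0:ℝ) ≤ 2) (ell u),
      Real.sqrt_mul (by norm_num : (0:ℝ) ≤ 2) (ell v)]
    have h22 : Real.sqrt 2 * Real.sqrt 2 = 2 := Real.mul_self_sqrt (by norm_num)
    calc Real.sqrt 2 * Real.sqrt (ell u) * (Real.sqrt 2 * Real.sqrt (ell v))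
        = (Real.sqrt 2 * Real.sqrt 2) * (Real.sqrt (ell u) * Real.sqrt (ell v)) := by ring
      _ = 2 * (Real.sqrt (ell u) * Real.sqrt (ell v)) := by rw [h22]
  have hsq : (Real.sqrt (ell u) + Real.sqrt (ell v))^2
      = ell u + ell v + 2 * (Real.sqrt (ell u) * Real.sqrt (ell v)) := by
    rw [add_sq, Real.sq_sqrt (ell_nonneg hu), Real.sq_sqrt (ell_nonneg hv)]
    ring
  rw [hdecomp, hsq]
  have : Real.log (1 + tu*tv) ≤ 2 * (Real.sqrt (ell u) * Real.sqrt (ell v)) := by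
    calc Real.log (1+tu*tv) ≤ tu*tv := hlog_le
    _ ≤ _ := by rw [← h3]; exact h2
  linarith

variable {n : ℕ}

def Fbelow (n k : ℕ) : Finset (Fin n) := Finset.univ.filter (fun i => (i : ℕ) < k)

lemma mem_Fbelow {k : ℕ} {i : Fin n} : i ∈ Fbelow n k ↔ (i : ℕ) < k := by
  simp [Fbelow]

lemma Fbelow_zero : Fbelow n 0 = ∅ := by
  ext i; simp [Fbelow]

lemma Fbelow_succ {k : ℕ} (hk : k < n) :
    Fbelow n (k+1) = insert (⟨k, hk⟩ : Fin n) (Fbelow n k) := by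
  ext i
  simp only [mem_Fbelow, Finset.mem_insert, Fin.ext_iff]
  omega

lemma not_mem_Fbelow {k : ℕ} (hk : k < n) : (⟨k, hk⟩ : Fin n) ∉ Fbelow n k := by
  simp [Fbelow]

lemma Fbelow_card {k : ℕ} (hk : k ≤ n) : (Fbelow n k).card = k := by
  induction k with
  | zero => simp [Fbelow_zero]
  | succ k ih =>
    have hkn : k < n := hk
    rw [Fbelow_succ hkn, Finset.card_insert_of_notMem (not_mem_Fbelow hkn),
      ih (le_of_lt hkn)]

lemma Fbelow_self : Fbelow n n = Finset.univ := by
  ext i; simp [Fbelow, i.isLt]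

/-- permutation sorting `v` in decreasing order -/
noncomputable def dperm (v : Fin n → ℝ) : Equiv.Perm (Fin n) :=
  Tuple.sort (fun i => -v i)

lemma dperm_antitone (v : Fin n → ℝ) : Antitone (fun i => v (dperm v i)) := by
  intro i j hij
  have h := Tuple.monotone_sort (fun i => -v i) hij
  have h' : -v (dperm v i) ≤ -v (dperm v j) := h
  show v (dperm v j) ≤ v (dperm v i); linarith

lemma sum_dperm (v : Fin n → ℝ) (f : ℝ → ℝ) : ∑ i, f (v (dperm v i)) = ∑ i, f (v i) :=
  Equiv.sum_comp (dperm v) (fun i => f (v i))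

/-- Scalar LP lemma: a `[0,1]`-weighted sum with total weight `k` is at most the
sum of the `k` largest values. -/
lemma lp_scalar (m t : Fin n → ℝ) (ht0 : ∀ i, 0 ≤ t i) (ht1 : ∀ i, t i ≤ 1)
    (k : ℕ) (hk : k ≤ n) (hsum : ∑ i, t i = k) :
    ∑ i, m i * t i ≤ ∑ i ∈ Fbelow n k, m (dperm m i) := by
  classical
  set σ := dperm m with hσ
  have hre : ∑ i, m i * t i = ∑ i, m (σ i) * t (σ i) :=
    (Equiv.sum_comp σ (fun i => m i * t i)).symm
  have hts : ∑ i, t (σ i) = k := by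
    rw [Equiv.sum_comp σ t]; exact hsum
  rcases Nat.eq_zero_or_pos k with hk0 | hk0
  · subst hk0
    have ht : ∀ i ∈ Finset.univ, t i = 0 := by
      rw [← Finset.sum_eq_zero_iff_of_nonneg (fun i _ => ht0 i)]
      simpa using hsum
    rw [Fbelow_zero]
    simp only [Finset.sum_empty]
    have hz : ∑ i, m i * t i = 0 :=
      Finset.sum_eq_zero (fun i hi => by rw [ht i hi, mul_zero])
    rw [hz]
  · have hk1 : k - 1 < n := by omega
    set jk : Fin n := ⟨k-1, hk1⟩ with hjk
    set θ := m (σ jk) with hθ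
    have key1 : ∀ i ∈ Fbelow n k, θ ≤ m (σ i) := by
      intro i hi
      rw [mem_Fbelow] at hi
      exact dperm_antitone m (show i ≤ jk by rw [Fin.le_def]; simp [hjk]; omega)
    have key2 : ∀ i ∉ Fbelow n k, m (σ i) ≤ θ := by
      intro i hi
      rw [mem_Fbelow] at hi
      exact dperm_antitone m (show jk ≤ i by rw [Fin.le_def]; simp [hjk]; omega)
    have step1 : ∑ i, m (σ i) * t (σ i)
        = (∑ i, (m (σ i) - θ) * t (σ i)) + θ * k := by
      rw [Finset.sum_congr rfl (fun i _ => show (m (σ i) - θ) * t (σ i)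
          = m (σ i) * t (σ i) - θ * t (σ i) by ring),
        Finset.sum_sub_distrib, ← Finset.mul_sum, hts]
      ring
    have split : ∑ i, (m (σ i) - θ) * t (σ i)
        ≤ ∑ i ∈ Fbelow n k, (m (σ i) - θ) := by
      have := Finset.sum_filter_add_sum_filter_not Finset.univ
        (fun i : Fin n => (i : ℕ) < k) (fun i => (m (σ i) - θ) * t (σ i))
      rw [show Finset.univ.filter (fun i : Fin n => (i:ℕ) < k) = Fbelow n k from rfl] at this
      rw [← this]
      have h1 : ∑ i ∈ Fbelow n k, (m (σ i) - θ) * t (σ i)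
          ≤ ∑ i ∈ Fbelow n k, (m (σ i) - θ) := by
        apply Finset.sum_le_sum
        intro i hi
        have h := key1 i hi
        have := ht1 (σ i)
        nlinarith [ht0 (σ i)]
      have h2 : ∑ i ∈ Finset.univ.filter (fun i : Fin n => ¬ (i:ℕ) < k),
          (m (σ i) - θ) * t (σ i) ≤ 0 := by
        apply Finset.sum_nonpos
        intro i hi
        rw [Finset.mem_filter] at hi
        have h := key2 i (by rw [mem_Fbelow]; exact hi.2)
        have := ht0 (σ i)
        nlinarith
      linarith
    have final : ∑ i ∈ Fbelow n k, (m (σ i) - θ)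
        = (∑ i ∈ Fbelow n k, m (σ i)) - θ * k := by
      rw [Finset.sum_sub_distrib, Finset.sum_const, Fbelow_card hk]
      ring
    rw [hre, step1]
    calc (∑ i, (m (σ i) - θ) * t (σ i)) + θ * k
        ≤ (∑ i ∈ Fbelow n k, (m (σ i) - θ)) + θ * k := by linarith
      _ = ∑ i ∈ Fbelow n k, m (σ i) := by rw [final]; ring

/-- Hardy–Littlewood–Pólya style lemma: majorization increases `∑ log`. -/
lemma hlp (x y : Fin n → ℝ) (hx : ∀ i, 0 < x i) (hy : ∀ i, 0 < y i)
    (hxa : Antitone x)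
    (hpk : ∀ k, k ≤ n → ∑ i ∈ Fbelow n k, x i ≤ ∑ i ∈ Fbelow n k, y i)
    (htot : ∑ i, x i = ∑ i, y i) :
    ∑ i, Real.log (y i) ≤ ∑ i, Real.log (x i) := by
  classical
  have h1 : ∀ i, Real.log (y i) - Real.log (x i) ≤ (y i - x i) * (x i)⁻¹ := by
    intro i
    have h := Real.log_le_sub_one_of_pos (div_pos (hy i) (hx i))
    rw [Real.log_div (ne_of_gt (hy i)) (ne_of_gt (hx i))] at h
    have hxi := hx i
    have : y i / x i - 1 = (y i - x i) * (x i)⁻¹ := by field_simp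
    linarith [this ▸ h]
  suffices habel : ∑ i, (y i - x i) * (x i)⁻¹ ≤ 0 by
    have hs := Finset.sum_le_sum (fun i (_ : i ∈ Finset.univ) => h1 i)
    rw [Finset.sum_sub_distrib] at hs
    linarith
  have hD : ∀ k, k ≤ n → 0 ≤ ∑ i ∈ Fbelow n k, (y i - x i) := by
    intro k hk
    rw [Finset.sum_sub_distrib]
    linarith [hpk k hk]
  have main : ∀ k, ∀ (hkn : k < n),
      ∑ i ∈ Fbelow n (k+1), (y i - x i) * (x i)⁻¹
        ≤ (∑ i ∈ Fbelow n (k+1), (y i - x i)) * (x ⟨k, hkn⟩)⁻¹ := by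
    intro k
    induction k with
    | zero =>
      intro hkn
      rw [Fbelow_succ hkn, Fbelow_zero]
      simp
    | succ k ih =>
      intro hkn
      have hkn' : k < n := by omega
      have hc : (x ⟨k, hkn'⟩)⁻¹ ≤ (x ⟨k+1, hkn⟩)⁻¹ := by
        have hmono : x ⟨k+1, hkn⟩ ≤ x ⟨k, hkn'⟩ :=
          hxa (show (⟨k, hkn'⟩ : Fin n) ≤ ⟨k+1, hkn⟩ by rw [Fin.le_def]; simp)
        exact inv_anti₀ (hx _) hmono
      have hins := Fbelow_succ (k := k+1) hkn
      rw [hins, Finset.sum_insert (not_mem_Fbelow hkn), Finset.sum_insert (not_mem_Fbelow hkn)]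
      have hDk := hD (k+1) (le_of_lt hkn)
      calc (y ⟨k+1,hkn⟩ - x ⟨k+1,hkn⟩) * (x ⟨k+1,hkn⟩)⁻¹
            + ∑ i ∈ Fbelow n (k+1), (y i - x i) * (x i)⁻¹
          ≤ (y ⟨k+1,hkn⟩ - x ⟨k+1,hkn⟩) * (x ⟨k+1,hkn⟩)⁻¹
            + (∑ i ∈ Fbelow n (k+1), (y i - x i)) * (x ⟨k, hkn'⟩)⁻¹ := by
            linarith [ih hkn']
        _ ≤ (y ⟨k+1,hkn⟩ - x ⟨k+1,hkn⟩) * (x ⟨k+1,hkn⟩)⁻¹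
            + (∑ i ∈ Fbelow n (k+1), (y i - x i)) * (x ⟨k+1, hkn⟩)⁻¹ := by
            have := mul_le_mul_of_nonneg_left hc hDk
            linarith
        _ = ((y ⟨k+1,hkn⟩ - x ⟨k+1,hkn⟩) + ∑ i ∈ Fbelow n (k+1), (y i - x i))
            * (x ⟨k+1, hkn⟩)⁻¹ := by ring
  rcases Nat.eq_zero_or_pos n with hn | hn
  · subst hn; simp
  · have hn1 : n - 1 < n := by omega
    have htot0 : ∑ i, (y i - x i) = 0 := by
      rw [Finset.sum_sub_distrib]; linarith
    have := main (n-1) hn1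
    rw [show n - 1 + 1 = n by omega, Fbelow_self] at this
    calc ∑ i, (y i - x i) * (x i)⁻¹ ≤ (∑ i, (y i - x i)) * (x ⟨n-1, hn1⟩)⁻¹ := this
      _ = 0 := by rw [htot0]; ring



/-- unitary diagonalization data -/
def UDiag (X V : Matrix (Fin n) (Fin n) ℂ) (x : Fin n → ℝ) : Prop :=
  V * star V = 1 ∧ star V * V = 1 ∧
    X = V * Matrix.diagonal (fun i => (x i : ℂ)) * star V

lemma udiag_spectral {X : Matrix (Fin n) (Fin n) ℂ} (hX : X.IsHermitian) :
    UDiag X (Matrix.IsHermitian.eigenvectorUnitary hX : Matrix (Fin n) (Fin n) ℂ)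
      hX.eigenvalues := by
  refine ⟨?_, ?_, ?_⟩
  · exact (Matrix.mem_unitaryGroup_iff).mp (Matrix.IsHermitian.eigenvectorUnitary hX).2
  · exact (Matrix.mem_unitaryGroup_iff').mp (Matrix.IsHermitian.eigenvectorUnitary hX).2
  · have h := hX.spectral_theorem
    convert h using 1
    rw [Unitary.conjStarAlgAut_apply]; rfl
example : True := trivial

lemma udiag_det {X V : Matrix (Fin n) (Fin n) ℂ} {x : Fin n → ℝ}
    (h : UDiag X V x) : X.det.re = ∏ i, x i := by
  obtain ⟨h1, h2, h3⟩ := h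
  have hdet : X.det = ((∏ i, x i : ℝ) : ℂ) := by
    rw [h3, Matrix.det_mul, Matrix.det_mul]
    have : V.det * (Matrix.diagonal (fun i => (x i : ℂ))).det * (star V).det
        = (V.det * (star V).det) * (Matrix.diagonal (fun i => (x i : ℂ))).det := by ring
    rw [this, ← Matrix.det_mul, h1, Matrix.det_one, one_mul, Matrix.det_diagonal]
    push_cast
    rfl
  rw [hdet, Complex.ofReal_re]

lemma udiag_trace {X V : Matrix (Fin n) (Fin n) ℂ} {x : Fin n → ℝ}
    (h : UDiag X V x) : X.trace = ((∑ i, x i : ℝ) : ℂ) := by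
  obtain ⟨h1, h2, h3⟩ := h
  rw [h3, Matrix.trace_mul_cycle, h2, Matrix.one_mul, Matrix.trace_diagonal]
  push_cast
  rfl

lemma trFun_herm {X : Matrix (Fin n) (Fin n) ℂ} (hX : X.IsHermitian) (f : ℝ → ℝ) :
    trFun f X = ∑ i, f (hX.eigenvalues i) := by
  rw [trFun, dif_pos hX]

lemma det_re_pos {X : Matrix (Fin n) (Fin n) ℂ} (hX : X.PosDef) : 0 < X.det.re := by
  rw [udiag_det (udiag_spectral hX.1)]
  exact Finset.prod_pos (fun i _ => hX.eigenvalues_pos i)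

lemma trFun_log {X : Matrix (Fin n) (Fin n) ℂ} (hX : X.PosDef) :
    trFun Real.log X = Real.log X.det.re := by
  rw [trFun_herm hX.1, udiag_det (udiag_spectral hX.1),
    Real.log_prod (fun i _ => ne_of_gt (hX.eigenvalues_pos i))]

lemma real_smul_eq {M : Matrix (Fin n) (Fin n) ℂ} (r : ℝ) :
    r • M = (r : ℂ) • M := by
  ext i j
  simp [Matrix.smul_apply, Complex.real_smul]

lemma posDef_real_smul {M : Matrix (Fin n) (Fin n) ℂ} (hM : M.PosDef) {r : ℝ}
    (hr : 0 < r) : (r • M).PosDef := by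
  exact hM.smul hr

lemma posDef_conj {M : Matrix (Fin n) (Fin n) ℂ} (hM : M.PosDef)
    (P : Matrix (Fin n) (Fin n) ℂ) (hP : IsUnit P.det) :
    (Pᴴ * M * P).PosDef := by
  exact hM.conjTranspose_mul_mul_same
    (Matrix.mulVec_injective_of_isUnit ((Matrix.isUnit_iff_isUnit_det P).mpr hP))

lemma det_conj_re {M : Matrix (Fin n) (Fin n) ℂ}
    (P : Matrix (Fin n) (Fin n) ℂ) :
    (Pᴴ * M * P).det.re = Complex.normSq P.det * M.det.re := by
  rw [Matrix.det_mul, Matrix.det_mul, Matrix.det_conjTranspose]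
  have : star P.det * M.det * P.det = ((Complex.normSq P.det : ℝ) : ℂ) * M.det := by
    rw [show star P.det = (starRingEnd ℂ) P.det from rfl]
    rw [show ((Complex.normSq P.det : ℝ) : ℂ) = P.det * (starRingEnd ℂ) P.det from
      (Complex.mul_conj P.det).symm]
    ring
  rw [this, Complex.re_ofReal_mul]

lemma dsq_det_form {A B : Matrix (Fin n) (Fin n) ℂ} (hA : A.PosDef) (hB : B.PosDef) :
    dsqLog A B = Real.log (((1:ℝ)/2)^n * (A+B).det.re)
      - Real.log A.det.re / 2 - Real.log B.det.re / 2 := by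
  have hAB : (A + B).PosDef := hA.add hB
  have hhalf : (((1:ℝ)/2) • (A+B)).PosDef := posDef_real_smul hAB (by norm_num)
  have hdet : (((1:ℝ)/2) • (A+B)).det.re = ((1:ℝ)/2)^n * (A+B).det.re := by
    rw [real_smul_eq, Matrix.det_smul, Fintype.card_fin]
    rw [← Complex.ofReal_pow, Complex.re_ofReal_mul]
  rw [dsqLog, trFun_log hA, trFun_log hB, trFun_log hhalf, hdet]
  ring

lemma dsq_symm (A B : Matrix (Fin n) (Fin n) ℂ) : dsqLog A B = dsqLog B A := by
  rw [dsqLog, dsqLog, add_comm A B]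
  ring

lemma dsq_conj_invariant {A B : Matrix (Fin n) (Fin n) ℂ} (hA : A.PosDef) (hB : B.PosDef)
    (P : Matrix (Fin n) (Fin n) ℂ) (hP : IsUnit P.det) :
    dsqLog (Pᴴ * A * P) (Pᴴ * B * P) = dsqLog A B := by
  have hA' := posDef_conj hA P hP
  have hB' := posDef_conj hB P hP
  have hABpd : (A+B).PosDef := hA.add hB
  have hsum : Pᴴ * A * P + Pᴴ * B * P = Pᴴ * (A + B) * P := by
    rw [Matrix.mul_add, Matrix.add_mul]
  have hns : (0:ℝ) < Complex.normSq P.det := by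
    rw [Complex.normSq_pos]
    exact hP.ne_zero
  have hlog : ∀ (M : Matrix (Fin n) (Fin n) ℂ), M.PosDef →
      Real.log (Pᴴ * M * P).det.re = Real.log (Complex.normSq P.det) + Real.log M.det.re := by
    intro M hM
    rw [det_conj_re, Real.log_mul (ne_of_gt hns) (ne_of_gt (det_re_pos hM))]
  have h1 : Real.log (((1:ℝ)/2)^n * (Pᴴ * (A+B) * P).det.re)
      = Real.log (Complex.normSq P.det) + Real.log (((1:ℝ)/2)^n * (A+B).det.re) := by
    rw [det_conj_re]
    rw [show ((1:ℝ)/2)^n * (Complex.normSq P.det * (A+B).det.re)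
      = Complex.normSq P.det * (((1:ℝ)/2)^n * (A+B).det.re) by ring]
    have hne : (((1:ℝ)/2)^n * (A+B).det.re) ≠ 0 := by
      have := det_re_pos hABpd
      positivity
    rw [Real.log_mul (ne_of_gt hns) hne]
  rw [dsq_det_form hA' hB', dsq_det_form hA hB, hsum, hlog A hA, hlog B hB, h1]
  ring

lemma udiag_one_add {E V : Matrix (Fin n) (Fin n) ℂ} {e : Fin n → ℝ}
    (h : UDiag E V e) : UDiag (1 + E) V (fun i => 1 + e i) := by
  obtain ⟨h1, h2, h3⟩ := h
  refine ⟨h1, h2, ?_⟩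
  have : Matrix.diagonal (fun i => ((1 + e i : ℝ) : ℂ))
      = 1 + Matrix.diagonal (fun i => (e i : ℂ)) := by
    ext i j
    rcases eq_or_ne i j with rfl | hne
    · simp only [Matrix.diagonal_apply_eq, Matrix.add_apply, Matrix.one_apply_eq]
      push_cast; ring
    · simp [Matrix.diagonal_apply_ne _ hne, Matrix.one_apply_ne hne]
  rw [this, Matrix.mul_add, Matrix.add_mul, Matrix.mul_one, h1, h3]

/-- `dsqLog 1 E = ∑ ell (eigenvalues)` for any unitary diagonalization of `E`. -/
lemma dsq_one_eq {E V : Matrix (Fin n) (Fin n) ℂ} {e : Fin n → ℝ}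
    (hE : E.PosDef) (h : UDiag E V e) (he : ∀ i, 0 < e i) :
    dsqLog 1 E = ∑ i, ell (e i) := by
  have h1E : ((1:Matrix (Fin n) (Fin n) ℂ) + E).det.re = ∏ i, (1 + e i) :=
    udiag_det (udiag_one_add h)
  have hdetE : E.det.re = ∏ i, e i := udiag_det h
  rw [dsq_det_form Matrix.PosDef.one hE, h1E, hdetE, Matrix.det_one]
  have hprod : ((1:ℝ)/2)^n * ∏ i, (1 + e i) = ∏ i, ((1 + e i)/2) := by
    rw [Finset.prod_div_distrib, Finset.prod_const, Finset.card_univ, Fintype.card_fin]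
    rw [one_div, inv_pow, div_eq_mul_inv, mul_comm]
  rw [hprod]
  have hlog1 : Real.log (∏ i, ((1 + e i)/2)) = ∑ i, Real.log ((1 + e i)/2) :=
    Real.log_prod (fun i _ => by have := he i; positivity)
  have hlog2 : Real.log (∏ i, e i) = ∑ i, Real.log (e i) :=
    Real.log_prod (fun i _ => ne_of_gt (he i))
  rw [hlog1, hlog2]
  simp only [Complex.one_re, Real.log_one, zero_div, sub_zero]
  rw [Finset.sum_div, ← Finset.sum_sub_distrib]
  simp only [ell]

/-- Simultaneous congruence diagonalization of two positive definite matrices. -/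
lemma simul {A C : Matrix (Fin n) (Fin n) ℂ} (hA : A.PosDef) (hC : C.PosDef) :
    ∃ (P : Matrix (Fin n) (Fin n) ℂ) (μ : Fin n → ℝ), IsUnit P.det ∧ (∀ i, 0 < μ i) ∧
      Pᴴ * A * P = 1 ∧ Pᴴ * C * P = Matrix.diagonal (fun i => (μ i : ℂ)) := by
  classical
  obtain ⟨hU1', hU2', hU3'⟩ := udiag_spectral hA.1
  set U' := (hA.1.eigenvectorUnitary : Matrix (Fin n) (Fin n) ℂ) with hU'def
  set D' := Matrix.diagonal (fun i => ((Real.sqrt (hA.1.eigenvalues i) : ℝ) : ℂ)) with hD'def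
  set S := U' * D' * star U' with hSdef
  have hDD : D' * D' = Matrix.diagonal (fun i => ((hA.1.eigenvalues i : ℝ) : ℂ)) := by
    rw [hD'def, Matrix.diagonal_mul_diagonal]; congr 1; funext i
    rw [← Complex.ofReal_mul, Real.mul_self_sqrt (le_of_lt (hA.eigenvalues_pos i))]
  have hS : S.IsHermitian ∧ S * S = A := by
    refine ⟨?_, ?_⟩
    · rw [Matrix.IsHermitian, hSdef, hD'def]
      simp [Matrix.mul_assoc, Matrix.star_eq_conjTranspose]
      congr 3; funext i; simp
    · rw [hSdef, show U' * D' * star U' * (U' * D' * star U')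
          = U' * D' * (star U' * U') * D' * star U' by simp only [Matrix.mul_assoc], hU2',
        Matrix.mul_one, Matrix.mul_assoc U' D' D', hDD]
      exact hU3'.symm
  have hSS : S * S = A := hS.2
  clear_value S
  have hdetA : A.det ≠ 0 := by
    have h := hA.det_pos
    exact ne_of_gt h
  have hdetS : IsUnit S.det := by
    rw [isUnit_iff_ne_zero]
    intro hzero
    apply hdetA
    rw [← hSS, Matrix.det_mul, hzero, mul_zero]
  set T := S⁻¹ with hTdef
  have hTh : T.IsHermitian := hS.1.inv
  have hdetT : IsUnit T.det := S.isUnit_nonsing_inv_det hdetS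
  have hTAT : T * A * T = 1 := by
    rw [← hSS, show T * (S * S) * T = (T * S) * (S * T) by
      rw [Matrix.mul_assoc, Matrix.mul_assoc, Matrix.mul_assoc],
      Matrix.nonsing_inv_mul S hdetS, Matrix.mul_nonsing_inv S hdetS, Matrix.one_mul]
  have hM : (T * C * T).PosDef := by
    have := posDef_conj hC T hdetT
    rwa [hTh.eq] at this
  set M := T * C * T with hMdef
  set U := (Matrix.IsHermitian.eigenvectorUnitary hM.1 : Matrix (Fin n) (Fin n) ℂ) with hUdef
  have hU := udiag_spectral hM.1
  obtain ⟨hU1, hU2, hU3⟩ := hU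
  have hdetU : IsUnit U.det := by
    apply IsUnit.of_mul_eq_one (star U).det
    rw [← Matrix.det_mul, hU1, Matrix.det_one]
  refine ⟨T * U, hM.1.eigenvalues, ?_, fun i => hM.eigenvalues_pos i, ?_, ?_⟩
  · rw [Matrix.det_mul]
    exact hdetT.mul hdetU
  · have hconj : (T * U)ᴴ = star U * T := by
      rw [Matrix.conjTranspose_mul, ← Matrix.star_eq_conjTranspose U, hTh.eq]
    rw [hconj, show star U * T * A * (T * U) = star U * (T * A * T) * U by
      simp only [Matrix.mul_assoc], hTAT, Matrix.mul_one, hU2]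
  · have hconj : (T * U)ᴴ = star U * T := by
      rw [Matrix.conjTranspose_mul, ← Matrix.star_eq_conjTranspose U, hTh.eq]
    rw [hconj, show star U * T * C * (T * U) = star U * (T * C * T) * U by
      simp only [Matrix.mul_assoc], ← hMdef]
    conv_lhs => rw [hU3]
    rw [← Matrix.mul_assoc, ← Matrix.mul_assoc, hU2, Matrix.one_mul, Matrix.mul_assoc, hU2,
      Matrix.mul_one]


section KyFan

variable {n : ℕ}

/-- indicator diagonal entries -/
noncomputable def chi (S : Finset (Fin n)) : Fin n → ℂ := fun j => if j ∈ S then 1 else 0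

lemma trace_mul_diag (M : Matrix (Fin n) (Fin n) ℂ) (d : Fin n → ℂ) :
    (M * Matrix.diagonal d).trace = ∑ i, M i i * d i := by
  rw [Matrix.trace]
  apply Finset.sum_congr rfl
  intro i _
  rw [Matrix.diag_apply, Matrix.mul_diagonal]

lemma trace_P_self {Z Vz : Matrix (Fin n) (Fin n) ℂ} {z : Fin n → ℝ}
    (hud : UDiag Z Vz z) (S : Finset (Fin n)) :
    ((Vz * Matrix.diagonal (chi S) * star Vz) * Z).trace = ((∑ j ∈ S, z j : ℝ) : ℂ) := by
  obtain ⟨h1, h2, h3⟩ := hud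
  have key : (Vz * Matrix.diagonal (chi S) * star Vz) * Z
      = Vz * (Matrix.diagonal (chi S) * Matrix.diagonal (fun i => (z i : ℂ))) * star Vz := by
    rw [h3]
    simp only [Matrix.mul_assoc]
    rw [show star Vz * (Vz * (Matrix.diagonal (fun i => (z i : ℂ)) * star Vz))
      = Matrix.diagonal (fun i => (z i : ℂ)) * star Vz by
      rw [← Matrix.mul_assoc, h2, Matrix.one_mul]]
  rw [key, Matrix.trace_mul_cycle, ← Matrix.mul_assoc, h2, Matrix.one_mul,
    Matrix.diagonal_mul_diagonal, Matrix.trace_diagonal]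
  rw [show ∑ i, chi S i * (z i : ℂ) = ∑ i, if i ∈ S then (z i : ℂ) else 0 by
    apply Finset.sum_congr rfl; intro i _
    by_cases h : i ∈ S <;> simp [chi, h]]
  rw [Finset.sum_ite_mem, Finset.univ_inter]
  push_cast
  try rfl

lemma trace_proj_le {X V : Matrix (Fin n) (Fin n) ℂ} {x : Fin n → ℝ}
    (hud : UDiag X V x) (Vz : Matrix (Fin n) (Fin n) ℂ)
    (hz1 : Vz * star Vz = 1) (hz2 : star Vz * Vz = 1)
    (S : Finset (Fin n)) (k : ℕ) (hk : k ≤ n) (hS : S.card = k) :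
    (((Vz * Matrix.diagonal (chi S) * star Vz) * X).trace).re
      ≤ ∑ i ∈ Fbelow n k, x (dperm x i) := by
  obtain ⟨h1, h2, h3⟩ := hud
  set W := star V * Vz with hW
  have hsW : star W = star Vz * V := by
    rw [hW, StarMul.star_mul, star_star]
  have hW1 : W * star W = 1 := by
    rw [hW, hsW, Matrix.mul_assoc, ← Matrix.mul_assoc Vz (star Vz) V, hz1,
      Matrix.one_mul, h2]
  have hW2 : star W * W = 1 := by
    rw [hW, hsW, Matrix.mul_assoc, ← Matrix.mul_assoc V (star V) Vz, h1,
      Matrix.one_mul, hz2]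
  -- main trace identity
  have key : (Vz * Matrix.diagonal (chi S) * star Vz) * X
      = V * (W * Matrix.diagonal (chi S) * star W * Matrix.diagonal (fun i => (x i : ℂ)))
        * star V := by
    rw [h3, hW, hsW]
    calc Vz * Matrix.diagonal (chi S) * star Vz
          * (V * Matrix.diagonal (fun i => (x i : ℂ)) * star V)
        = (1 : Matrix (Fin n) (Fin n) ℂ) * (Vz * (Matrix.diagonal (chi S) * (star Vz
            * (V * (Matrix.diagonal (fun i => (x i : ℂ)) * star V))))) := by
          simp only [Matrix.mul_assoc, Matrix.one_mul]
      _ = (V * star V) * (Vz * (Matrix.diagonal (chi S) * (star Vz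
            * (V * (Matrix.diagonal (fun i => (x i : ℂ)) * star V))))) := by rw [h1]
      _ = V * (star V * Vz * Matrix.diagonal (chi S) * (star Vz * V)
            * Matrix.diagonal (fun i => (x i : ℂ))) * star V := by
          simp only [Matrix.mul_assoc]
  have htr : ((Vz * Matrix.diagonal (chi S) * star Vz) * X).trace
      = ((W * Matrix.diagonal (chi S) * star W) * Matrix.diagonal (fun i => (x i : ℂ))).trace := by
    rw [key, Matrix.trace_mul_cycle, ← Matrix.mul_assoc, h2, Matrix.one_mul]
  -- entrywise: diagonal entries of W Dχ W*
  set t : Fin n → ℝ := fun i => ∑ j ∈ S, Complex.normSq (W i j) with ht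
  have hdiag : ∀ i, (W * Matrix.diagonal (chi S) * star W) i i
      = ((∑ j ∈ S, Complex.normSq (W i j) : ℝ) : ℂ) := by
    intro i
    rw [Matrix.mul_apply]
    have hterm : ∀ j, (W * Matrix.diagonal (chi S)) i j * (star W) j i
        = if j ∈ S then ((Complex.normSq (W i j) : ℝ) : ℂ) else 0 := by
      intro j
      rw [Matrix.mul_diagonal, Matrix.star_apply]
      by_cases h : j ∈ S
      · simp only [chi, if_pos h, mul_one]
        rw [show star (W i j) = (starRingEnd ℂ) (W i j) from rfl, Complex.mul_conj]
      · simp [chi, if_neg h]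
    rw [Finset.sum_congr rfl (fun j _ => hterm j), Finset.sum_ite_mem, Finset.univ_inter]
    push_cast
    try rfl
  have htr2 : (((Vz * Matrix.diagonal (chi S) * star Vz) * X).trace).re
      = ∑ i, x i * t i := by
    rw [htr, trace_mul_diag]
    have hsum : ∑ i, (W * Matrix.diagonal (chi S) * star W) i i * ((x i : ℝ) : ℂ)
        = ((∑ i, x i * t i : ℝ) : ℂ) := by
      rw [Finset.sum_congr rfl (fun i _ => by rw [hdiag i])]
      rw [ht]
      push_cast
      apply Finset.sum_congr rfl
      intro i _
      ring
    rw [hsum, Complex.ofReal_re]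
  -- row sums bound
  have hrow : ∀ i, ∑ j, Complex.normSq (W i j) = 1 := by
    intro i
    have := congrFun (congrFun hW1 i) i
    rw [Matrix.mul_apply] at this
    have hterm : ∀ j, W i j * (star W) j i = ((Complex.normSq (W i j) : ℝ) : ℂ) := by
      intro j
      rw [Matrix.star_apply, show star (W i j) = (starRingEnd ℂ) (W i j) from rfl,
        Complex.mul_conj]
    rw [Finset.sum_congr rfl (fun j _ => hterm j)] at this
    rw [Matrix.one_apply_eq] at this
    have := congrArg Complex.re this
    rw [show (∑ j, ((Complex.normSq (W i j) : ℝ) : ℂ)) = ((∑ j, Complex.normSq (W i j) : ℝ) : ℂ)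
      by push_cast; rfl, Complex.ofReal_re, Complex.one_re] at this
    exact this
  have hcol : ∀ j, ∑ i, Complex.normSq (W i j) = 1 := by
    intro j
    have := congrFun (congrFun hW2 j) j
    rw [Matrix.mul_apply] at this
    have hterm : ∀ i, (star W) j i * W i j = ((Complex.normSq (W i j) : ℝ) : ℂ) := by
      intro i
      rw [Matrix.star_apply, show star (W i j) = (starRingEnd ℂ) (W i j) from rfl,
        mul_comm, Complex.mul_conj]
    rw [Finset.sum_congr rfl (fun i _ => hterm i)] at this
    rw [Matrix.one_apply_eq] at this
    have := congrArg Complex.re this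
    rw [show (∑ i, ((Complex.normSq (W i j) : ℝ) : ℂ)) = ((∑ i, Complex.normSq (W i j) : ℝ) : ℂ)
      by push_cast; rfl, Complex.ofReal_re, Complex.one_re] at this
    exact this
  have ht0 : ∀ i, 0 ≤ t i := by
    intro i
    apply Finset.sum_nonneg
    intro j _
    exact Complex.normSq_nonneg _
  have ht1 : ∀ i, t i ≤ 1 := by
    intro i
    rw [← hrow i]
    apply Finset.sum_le_sum_of_subset_of_nonneg (Finset.subset_univ S)
    intro j _ _
    exact Complex.normSq_nonneg _
  have htsum : ∑ i, t i = k := by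
    rw [ht]
    rw [Finset.sum_comm]
    rw [Finset.sum_congr rfl (fun j _ => hcol j)]
    rw [Finset.sum_const, hS]
    simp
  rw [htr2]
  have := lp_scalar x t ht0 ht1 k hk htsum
  calc ∑ i, x i * t i = ∑ i, x i * t i := rfl
    _ ≤ ∑ i ∈ Fbelow n k, x (dperm x i) := this

/-- Ky Fan's inequality for partial sums of decreasing eigenvalues of a sum. -/
lemma kyfan {X Y Z Vx Vy Vz : Matrix (Fin n) (Fin n) ℂ} {x y z : Fin n → ℝ}
    (hux : UDiag X Vx x) (huy : UDiag Y Vy y) (huz : UDiag Z Vz z)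
    (hZ : Z = X + Y) (k : ℕ) (hk : k ≤ n) :
    ∑ i ∈ Fbelow n k, z (dperm z i)
      ≤ ∑ i ∈ Fbelow n k, x (dperm x i) + ∑ i ∈ Fbelow n k, y (dperm y i) := by
  classical
  set S : Finset (Fin n) := (Fbelow n k).image (dperm z) with hSdef
  have hScard : S.card = k := by
    rw [hSdef, Finset.card_image_of_injective _ (Equiv.injective _), Fbelow_card hk]
  have hLHS : ∑ i ∈ Fbelow n k, z (dperm z i) = ∑ j ∈ S, z j := by
    rw [hSdef, Finset.sum_image]
    intro a _ b _ hab
    exact (Equiv.injective _) hab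
  set P := Vz * Matrix.diagonal (chi S) * star Vz with hP
  have htrZ : ((P * Z).trace).re = ∑ j ∈ S, z j := by
    rw [trace_P_self huz S, Complex.ofReal_re]
  have hsplit : (P * Z).trace = (P * X).trace + (P * Y).trace := by
    rw [hZ, Matrix.mul_add, Matrix.trace_add]
  have hXle := trace_proj_le hux Vz huz.1 huz.2.1 S k hk hScard
  have hYle := trace_proj_le huy Vz huz.1 huz.2.1 S k hk hScard
  rw [hLHS, ← htrZ, hsplit, Complex.add_re]
  exact add_le_add hXle hYle

end KyFan


section Final

variable {n : ℕ}

lemma logdet_sum_ge {X Y Vx Vy : Matrix (Fin n) (Fin n) ℂ} {x y : Fin n → ℝ}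
    (hX : X.PosDef) (hY : Y.PosDef)
    (hux : UDiag X Vx x) (huy : UDiag Y Vy y)
    (hxp : ∀ i, 0 < x i) (hyp : ∀ i, 0 < y i) :
    ∑ i, Real.log (x (dperm x i) + y (dperm y i)) ≤ Real.log ((X+Y).det.re) := by
  have hZpd : (X+Y).PosDef := hX.add hY
  have huz := udiag_spectral hZpd.1
  have hzp : ∀ i, 0 < hZpd.1.eigenvalues i := fun i => hZpd.eigenvalues_pos i
  have htot : ∑ i, hZpd.1.eigenvalues (dperm hZpd.1.eigenvalues i)
      = ∑ i, (x (dperm x i) + y (dperm y i)) := by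
    rw [Equiv.sum_comp (dperm hZpd.1.eigenvalues) hZpd.1.eigenvalues,
      Finset.sum_add_distrib, Equiv.sum_comp (dperm x) x, Equiv.sum_comp (dperm y) y]
    have h1 := udiag_trace huz
    have h2 := udiag_trace hux
    have h3 := udiag_trace huy
    have hc : ((∑ i, hZpd.1.eigenvalues i : ℝ) : ℂ) = ((∑ i, x i + ∑ i, y i : ℝ) : ℂ) := by
      rw [← h1, Matrix.trace_add, h2, h3]; push_cast; ring
    exact_mod_cast hc
  have hmain := hlp (fun i => hZpd.1.eigenvalues (dperm hZpd.1.eigenvalues i))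
      (fun i => x (dperm x i) + y (dperm y i))
      (fun i => hzp _) (fun i => add_pos (hxp _) (hyp _))
      (dperm_antitone _)
      (fun k hk => by rw [Finset.sum_add_distrib]; exact kyfan hux huy huz rfl k hk)
      htot
  calc ∑ i, Real.log (x (dperm x i) + y (dperm y i))
      ≤ ∑ i, Real.log (hZpd.1.eigenvalues (dperm hZpd.1.eigenvalues i)) := hmain
    _ = ∑ i, Real.log (hZpd.1.eigenvalues i) := sum_dperm _ Real.log
    _ = Real.log ((X+Y).det.re) := by
        rw [udiag_det huz, Real.log_prod (fun i _ => ne_of_gt (hzp i))]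

noncomputable def sfun (a b : ℝ) : ℝ :=
  Real.log ((a+b)/2) - Real.log a / 2 - Real.log b / 2

lemma sfun_eq_ell {a b : ℝ} (ha : 0 < a) (hb : 0 < b) : sfun a b = ell (b/a) := by
  have hab : (0:ℝ) < a + b := by linarith
  have h1 : (1 : ℝ) + b/a = (a+b)/a := by field_simp
  have h2 : Real.log ((a+b)/a) = Real.log (a+b) - Real.log a :=
    Real.log_div (ne_of_gt hab) (ne_of_gt ha)
  have h3 : Real.log (b/a) = Real.log b - Real.log a :=
    Real.log_div (ne_of_gt hb) (ne_of_gt ha)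
  have h4 : Real.log (((a+b)/a)/2) = Real.log ((a+b)/a) - Real.log 2 :=
    Real.log_div (by positivity) (by norm_num)
  have h5 : Real.log ((a+b)/2) = Real.log (a+b) - Real.log 2 :=
    Real.log_div (ne_of_gt hab) (by norm_num)
  rw [sfun, ell, h1, h4, h2, h3, h5]
  ring

lemma dsq_lower {X Y Vx Vy : Matrix (Fin n) (Fin n) ℂ} {x y : Fin n → ℝ}
    (hX : X.PosDef) (hY : Y.PosDef)
    (hux : UDiag X Vx x) (huy : UDiag Y Vy y)
    (hxp : ∀ i, 0 < x i) (hyp : ∀ i, 0 < y i) :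
    ∑ i, sfun (x (dperm x i)) (y (dperm y i)) ≤ dsqLog X Y := by
  rw [dsq_det_form hX hY]
  have hdet : Real.log (((1:ℝ)/2)^n * (X+Y).det.re)
      = n * Real.log ((1:ℝ)/2) + Real.log ((X+Y).det.re) := by
    rw [Real.log_mul (by positivity) (ne_of_gt (det_re_pos (hX.add hY))), Real.log_pow]
  have hlogX : Real.log X.det.re = ∑ i, Real.log (x (dperm x i)) := by
    rw [udiag_det hux, Real.log_prod (fun i _ => ne_of_gt (hxp i)),
      sum_dperm x Real.log]
  have hlogY : Real.log Y.det.re = ∑ i, Real.log (y (dperm y i)) := by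
    rw [udiag_det huy, Real.log_prod (fun i _ => ne_of_gt (hyp i)),
      sum_dperm y Real.log]
  have hsfun : ∑ i, sfun (x (dperm x i)) (y (dperm y i))
      = ∑ i, Real.log (x (dperm x i) + y (dperm y i)) + n * Real.log ((1:ℝ)/2)
        - (∑ i, Real.log (x (dperm x i))) / 2 - (∑ i, Real.log (y (dperm y i))) / 2 := by
    have hterm : ∀ i : Fin n, sfun (x (dperm x i)) (y (dperm y i))
        = (Real.log (x (dperm x i) + y (dperm y i)) + Real.log ((1:ℝ)/2))
          - Real.log (x (dperm x i)) / 2 - Real.log (y (dperm y i)) / 2 := by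
      intro i
      rw [sfun]
      have hs : (0:ℝ) < x (dperm x i) + y (dperm y i) := add_pos (hxp _) (hyp _)
      have : Real.log ((x (dperm x i) + y (dperm y i))/2)
          = Real.log (x (dperm x i) + y (dperm y i)) - Real.log 2 :=
        Real.log_div (ne_of_gt hs) (by norm_num)
      have hhalf : Real.log ((1:ℝ)/2) = - Real.log 2 := by
        rw [show ((1:ℝ)/2) = (2:ℝ)⁻¹ by norm_num, Real.log_inv]
      rw [this, hhalf]
      ring
    rw [Finset.sum_congr rfl (fun i _ => hterm i)]
    rw [Finset.sum_sub_distrib, Finset.sum_sub_distrib, Finset.sum_add_distrib,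
      Finset.sum_const, Finset.card_univ, Fintype.card_fin, ← Finset.sum_div,
      ← Finset.sum_div]
    ring
  rw [hsfun, hdet, hlogX, hlogY]
  have := logdet_sum_ge hX hY hux huy hxp hyp
  linarith

lemma conj_cancel {M N P : Matrix (Fin n) (Fin n) ℂ} (hP : IsUnit P.det)
    (h : Pᴴ * M * P = Pᴴ * N * P) : M = N := by
  have hPH : IsUnit (Pᴴ).det := by
    rw [Matrix.det_conjTranspose]
    exact hP.star
  have key : ∀ (Q : Matrix (Fin n) (Fin n) ℂ), (Pᴴ)⁻¹ * (Pᴴ * Q * P) * P⁻¹ = Q := by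
    intro Q
    rw [show (Pᴴ)⁻¹ * (Pᴴ * Q * P) * P⁻¹ = ((Pᴴ)⁻¹ * Pᴴ) * Q * (P * P⁻¹) by
      simp only [Matrix.mul_assoc], Matrix.nonsing_inv_mul _ hPH,
      Matrix.mul_nonsing_inv _ hP, Matrix.one_mul, Matrix.mul_one]
  rw [← key M, h, key N]

lemma dsq_self (A : Matrix (Fin n) (Fin n) ℂ) : dsqLog A A = 0 := by
  have h : ((1:ℝ)/2) • (A + A) = A := by
    rw [← two_smul ℝ A, smul_smul]
    norm_num
  rw [dsqLog, h]
  ring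

/-- `dsqLog A B` as a sum of `ell` values, via simultaneous diagonalization. -/
lemma dsq_as_sum {A B : Matrix (Fin n) (Fin n) ℂ} (hA : A.PosDef) (hB : B.PosDef) :
    ∃ (P : Matrix (Fin n) (Fin n) ℂ) (μ : Fin n → ℝ), IsUnit P.det ∧ (∀ i, 0 < μ i) ∧
      Pᴴ * A * P = 1 ∧ Pᴴ * B * P = Matrix.diagonal (fun i => (μ i : ℂ)) ∧
      dsqLog A B = ∑ i, ell (μ i) := by
  obtain ⟨P, μ, hPdet, hμ, hPA, hPB⟩ := simul hA hB
  have hUD : UDiag (Matrix.diagonal (fun i => (μ i : ℂ))) 1 μ := by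
    refine ⟨by simp, by simp, by simp⟩
  have hDpd : (Matrix.diagonal (fun i => (μ i : ℂ))).PosDef := by
    rw [Matrix.posDef_diagonal_iff]
    intro i
    rw [Complex.zero_lt_real]
    exact hμ i
  refine ⟨P, μ, hPdet, hμ, hPA, hPB, ?_⟩
  have h1 : dsqLog (Pᴴ * A * P) (Pᴴ * B * P) = dsqLog A B :=
    dsq_conj_invariant hA hB P hPdet
  rw [← h1, hPA, hPB, dsq_one_eq hDpd hUD hμ]

lemma dsq_nonneg {A B : Matrix (Fin n) (Fin n) ℂ} (hA : A.PosDef) (hB : B.PosDef) :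
    0 ≤ dsqLog A B := by
  obtain ⟨P, μ, _, hμ, _, _, hsum⟩ := dsq_as_sum hA hB
  rw [hsum]
  exact Finset.sum_nonneg (fun i _ => ell_nonneg (hμ i))

end Final


/-- Sra's theorem: the square root of the symmetric Stein (LogDet) divergence
is a metric on the positive definite cone. -/
theorem sqrt_stein_divergence_is_metric {n : ℕ} :
    (∀ A B : Matrix (Fin n) (Fin n) ℂ, A.PosDef → B.PosDef →
        0 ≤ Real.sqrt (dsqLog A B)) ∧
    (∀ A B : Matrix (Fin n) (Fin n) ℂ, A.PosDef → B.PosDef →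
        Real.sqrt (dsqLog A B) = Real.sqrt (dsqLog B A)) ∧
    (∀ A B : Matrix (Fin n) (Fin n) ℂ, A.PosDef → B.PosDef →
        (Real.sqrt (dsqLog A B) = 0 ↔ A = B)) ∧
    (∀ A B C : Matrix (Fin n) (Fin n) ℂ, A.PosDef → B.PosDef → C.PosDef →
        Real.sqrt (dsqLog A C)
          ≤ Real.sqrt (dsqLog A B) + Real.sqrt (dsqLog B C)) := by
  refine ⟨fun A B _ _ => Real.sqrt_nonneg _, fun A B _ _ => by rw [dsq_symm], ?_, ?_⟩
  · -- definiteness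
    intro A B hA hB
    constructor
    · intro h
      obtain ⟨P, μ, hPdet, hμ, hPA, hPB, hsum⟩ := dsq_as_sum hA hB
      have hle : dsqLog A B ≤ 0 := Real.sqrt_eq_zero'.mp h
      have h0 : dsqLog A B = 0 := le_antisymm hle (dsq_nonneg hA hB)
      rw [hsum] at h0
      have hall := (Finset.sum_eq_zero_iff_of_nonneg
        (fun i (_ : i ∈ Finset.univ) => ell_nonneg (hμ i))).mp h0
      have hμ1 : ∀ i, μ i = 1 := fun i =>
        (ell_eq_zero_iff (hμ i)).mp (hall i (Finset.mem_univ i))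
      have hD1 : Matrix.diagonal (fun i => (μ i : ℂ)) = 1 := by
        rw [show (fun i : Fin n => (μ i : ℂ)) = fun _ => (1:ℂ) by
          funext i; rw [hμ1 i]; norm_num]
        exact Matrix.diagonal_one
      exact conj_cancel hPdet (by rw [hPA, hPB, hD1])
    · intro h
      subst h
      rw [dsq_self, Real.sqrt_zero]
  · -- triangle inequality
    intro A B C hA hB hC
    obtain ⟨P, μ, hPdet, hμ, hPA, hPC⟩ := simul hA hC
    set D := Matrix.diagonal (fun i => (μ i : ℂ)) with hD
    have hUD : UDiag D 1 μ := ⟨by simp, by simp, by simp [hD]⟩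
    have hDpd : D.PosDef := by
      rw [hD, Matrix.posDef_diagonal_iff]
      intro i
      rw [Complex.zero_lt_real]
      exact hμ i
    have hB' : (Pᴴ * B * P).PosDef := posDef_conj hB P hPdet
    have huB' := udiag_spectral hB'.1
    set β := hB'.1.eigenvalues with hβ
    have hβp : ∀ i, 0 < β i := fun i => hB'.eigenvalues_pos i
    have hAC : dsqLog A C = ∑ i, ell (μ i) := by
      rw [← dsq_conj_invariant hA hC P hPdet, hPA, hPC, dsq_one_eq hDpd hUD hμ]
    have hAB : dsqLog A B = ∑ i, ell (β i) := by
      rw [← dsq_conj_invariant hA hB P hPdet, hPA, dsq_one_eq hB' huB' hβp]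
    have hBC : ∑ i, sfun (β (dperm β i)) (μ (dperm μ i)) ≤ dsqLog B C := by
      rw [← dsq_conj_invariant hB hC P hPdet, hPC]
      exact dsq_lower hB' hDpd huB' hUD hβp hμ
    set r : Fin n → ℝ := fun i => ell (β (dperm β i)) with hr
    set q : Fin n → ℝ := fun i => ell (μ (dperm μ i) / β (dperm β i)) with hq
    have hr0 : ∀ i, 0 ≤ r i := fun i => ell_nonneg (hβp _)
    have hq0 : ∀ i, 0 ≤ q i := fun i => ell_nonneg (div_pos (hμ _) (hβp _))
    have hqs : ∀ i, sfun (β (dperm β i)) (μ (dperm μ i)) = q i := fun i =>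
      sfun_eq_ell (hβp _) (hμ _)
    have htri : ∀ i, ell (μ (dperm μ i)) ≤ (Real.sqrt (r i) + Real.sqrt (q i))^2 := by
      intro i
      have hu := hβp (dperm β i)
      have hv : 0 < μ (dperm μ i) / β (dperm β i) := div_pos (hμ _) hu
      have h := ell_mul_le hu hv
      rwa [show β (dperm β i) * (μ (dperm μ i) / β (dperm β i)) = μ (dperm μ i) by
        field_simp] at h
    have hAC2 : dsqLog A C ≤ ∑ i, (Real.sqrt (r i) + Real.sqrt (q i))^2 := by
      rw [hAC, ← sum_dperm μ ell]
      exact Finset.sum_le_sum (fun i _ => htri i)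
    have hABr : dsqLog A B = ∑ i, r i := by
      rw [hAB, ← sum_dperm β ell]
    have hsumr : (0:ℝ) ≤ ∑ i, r i := Finset.sum_nonneg (fun i _ => hr0 i)
    have hsumq : (0:ℝ) ≤ ∑ i, q i := Finset.sum_nonneg (fun i _ => hq0 i)
    have hmink : Real.sqrt (∑ i, (Real.sqrt (r i) + Real.sqrt (q i))^2)
        ≤ Real.sqrt (∑ i, r i) + Real.sqrt (∑ i, q i) := by
      rw [← Real.sqrt_sq (add_nonneg (Real.sqrt_nonneg (∑ i, r i))
        (Real.sqrt_nonneg (∑ i, q i)))]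
      apply Real.sqrt_le_sqrt
      have hexp : ∑ i, (Real.sqrt (r i) + Real.sqrt (q i))^2
          = ∑ i, r i + ∑ i, q i + 2 * ∑ i, Real.sqrt (r i) * Real.sqrt (q i) := by
        have hterm : ∀ i : Fin n, (Real.sqrt (r i) + Real.sqrt (q i))^2
            = r i + q i + 2*(Real.sqrt (r i) * Real.sqrt (q i)) := by
          intro i
          rw [add_sq, Real.sq_sqrt (hr0 i), Real.sq_sqrt (hq0 i)]
          ring
        rw [Finset.sum_congr rfl (fun i _ => hterm i), Finset.sum_add_distrib,
          Finset.sum_add_distrib, ← Finset.mul_sum]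
      have hcs := Real.sum_sqrt_mul_sqrt_le Finset.univ hr0 hq0
      rw [hexp, add_sq, Real.sq_sqrt hsumr, Real.sq_sqrt hsumq]
      linarith
    calc Real.sqrt (dsqLog A C)
        ≤ Real.sqrt (∑ i, (Real.sqrt (r i) + Real.sqrt (q i))^2) :=
          Real.sqrt_le_sqrt hAC2
      _ ≤ Real.sqrt (∑ i, r i) + Real.sqrt (∑ i, q i) := hmink
      _ ≤ Real.sqrt (dsqLog A B) + Real.sqrt (dsqLog B C) := by
          apply add_le_add
          · rw [hABr]
          · apply Real.sqrt_le_sqrt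
            calc ∑ i, q i = ∑ i, sfun (β (dperm β i)) (μ (dperm μ i)) :=
                  (Finset.sum_congr rfl (fun i _ => hqs i)).symm
              _ ≤ dsqLog B C := hBC
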